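/- Let (Ω, 𝓕, ℙ) be a probability space, E a finite-dimensional real inner product space, and P : E → ℝ a differentiable function whose gradient is L_P-Lipschitz (L_P > 0) and which is bounded below with infimum P*. Let w ∈ E, let 0 < η ≤ 1/(4L_P), and let G : Ω → E be a square-integrable random vector with mean m = 𝔼[G] and 𝔼[‖G - m‖²] ≤ σ². Then 𝔼[P(w - ηG)] - P* ≤ (P(w) - P*) - (η/2)‖∇P(w)‖² + (η/2)‖∇P(w) - m‖² + (L_P η² σ²)/2. -/

import Mathlib

/-!
The descent lemma `f y ≤ f x + ⟪∇f x, y - x⟫ + L/2 ‖y - x‖²` (the function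
`t ↦ f (x + t v) - t ⟪∇f x, v⟫ - L t² ‖v‖² / 2` has nonpositive derivative for `t ≥ 0`)
bounds `P (w - η G)` pointwise by a quadratic in `G`. Taking expectations and splitting
`𝔼‖G‖² = 𝔼‖G - m‖² + ‖m‖²` gives `P w - η ⟪∇P w, m⟫ + L η² (σ² + ‖m‖²) / 2`; then
`-2⟪∇P w, m⟫ = ‖∇P w - m‖² - ‖∇P w‖² - ‖m‖²` and `L η ≤ 1` absorbs the `‖m‖²` term.
-/

open MeasureTheory RealInnerProductSpace Set

section Smooth

variable {E : Type*} [NormedAddCommGroup E] [InnerProductSpace ℝ E] [CompleteSpace E]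
  {f : E → ℝ} {L : ℝ}

theorem hasDerivAt_comp_add_smul (hf : Differentiable ℝ f) (x v : E) (t : ℝ) :
    HasDerivAt (fun t : ℝ => f (x + t • v)) ⟪gradient f (x + t • v), v⟫ t := by
  have hline : HasDerivAt (fun t : ℝ => x + t • v) v t := by
    simpa using ((hasDerivAt_id t).smul_const v).const_add x
  have h := (hf _).hasGradientAt.hasFDerivAt.comp_hasDerivAt t hline
  rwa [InnerProductSpace.toDual_apply_apply] at h

theorem le_add_inner_gradient_add_sq (hf : Differentiable ℝ f)
    (hL : ∀ x y, ‖gradient f x - gradient f y‖ ≤ L * ‖x - y‖) (x y : E) :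
    f y ≤ f x + ⟪gradient f x, y - x⟫ + L / 2 * ‖y - x‖ ^ 2 := by
  set v := y - x
  let φ : ℝ → ℝ := fun t => f (x + t • v) - t * ⟪gradient f x, v⟫ - L / 2 * t ^ 2 * ‖v‖ ^ 2
  let φ' : ℝ → ℝ := fun t =>
    ⟪gradient f (x + t • v), v⟫ - ⟪gradient f x, v⟫ - L * t * ‖v‖ ^ 2
  have hφ : ∀ t, HasDerivAt φ (φ' t) t := by
    intro t
    refine (((hasDerivAt_comp_add_smul hf x v t).sub
      ((hasDerivAt_id t).mul_const ⟪gradient f x, v⟫)).sub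
      (((hasDerivAt_pow 2 t).const_mul (L / 2)).mul_const (‖v‖ ^ 2))).congr_deriv ?_
    simp only [φ']
    ring
  have hφ'_nonpos : ∀ t ∈ interior (Ici (0 : ℝ)), φ' t ≤ 0 := by
    intro t ht
    rw [interior_Ici] at ht
    have hgrad : ‖gradient f (x + t • v) - gradient f x‖ ≤ L * (t * ‖v‖) := by
      simpa [norm_smul, abs_of_pos (mem_Ioi.mp ht)] using hL (x + t • v) x
    have hcs := real_inner_le_norm (gradient f (x + t • v) - gradient f x) v
    rw [inner_sub_left] at hcs
    simp only [φ']
    nlinarith [norm_nonneg v]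
  have hanti := antitoneOn_of_hasDerivWithinAt_nonpos (convex_Ici 0)
    (fun t _ => (hφ t).continuousAt.continuousWithinAt)
    (fun t _ => (hφ t).hasDerivWithinAt) hφ'_nonpos
  have h01 := hanti self_mem_Ici (mem_Ici.mpr zero_le_one) zero_le_one
  simp only [φ, v, zero_smul, one_smul, add_zero, add_sub_cancel] at h01
  linarith

theorem apply_sub_smul_le (hf : Differentiable ℝ f)
    (hL : ∀ x y, ‖gradient f x - gradient f y‖ ≤ L * ‖x - y‖) (x u : E) (η : ℝ) :
    f (x - η • u) ≤ f x - η * ⟪gradient f x, u⟫ + L / 2 * η ^ 2 * ‖u‖ ^ 2 := by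
  have h := le_add_inner_gradient_add_sq hf hL x (x - η • u)
  rw [sub_sub_cancel_left, inner_neg_right, inner_smul_right, norm_neg, norm_smul,
    Real.norm_eq_abs, mul_pow, sq_abs] at h
  linarith

end Smooth

section Expectation

variable {Ω : Type*} [MeasurableSpace Ω] {μ : Measure Ω} [IsProbabilityMeasure μ]
  {E : Type*} [NormedAddCommGroup E] [InnerProductSpace ℝ E] [CompleteSpace E] {G : Ω → E}

theorem integral_norm_sub_integral_sq (hG : MemLp G 2 μ) :
    ∫ s, ‖G s - ∫ t, G t ∂μ‖ ^ 2 ∂μ = ∫ s, ‖G s‖ ^ 2 ∂μ - ‖∫ s, G s ∂μ‖ ^ 2 := by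
  set m := ∫ t, G t ∂μ
  have hG₁ : Integrable G μ := hG.integrable one_le_two
  have hsq : Integrable (fun s => ‖G s‖ ^ 2) μ := hG.norm.integrable_sq
  have hinner : Integrable (fun s => 2 * ⟪m, G s⟫) μ := (hG₁.const_inner m).const_mul 2
  have hdiff : Integrable (fun s => ‖G s‖ ^ 2 - 2 * ⟪m, G s⟫) μ := hsq.sub hinner
  simp_rw [norm_sub_sq_real, real_inner_comm m]
  rw [integral_add hdiff (integrable_const _), integral_sub hsq hinner,
    integral_const_mul, integral_inner hG₁, real_inner_self_eq_norm_sq, integral_const,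
    probReal_univ, one_smul]
  ring

theorem integral_apply_sub_smul_le {f : E → ℝ} {L : ℝ} (hf : Differentiable ℝ f)
    (hL : ∀ x y, ‖gradient f x - gradient f y‖ ≤ L * ‖x - y‖) (hbdd : BddBelow (range f))
    (x : E) (η : ℝ) (hG : MemLp G 2 μ) :
    ∫ s, f (x - η • G s) ∂μ ≤
      f x - η * ⟪gradient f x, ∫ s, G s ∂μ⟫ + L / 2 * η ^ 2 * ∫ s, ‖G s‖ ^ 2 ∂μ := by
  obtain ⟨c, hc⟩ := hbdd
  have hG₁ : Integrable G μ := hG.integrable one_le_two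
  have hlin : Integrable (fun s => f x - η * ⟪gradient f x, G s⟫) μ :=
    (integrable_const _).sub ((hG₁.const_inner _).const_mul η)
  have hquad : Integrable (fun s => L / 2 * η ^ 2 * ‖G s‖ ^ 2) μ :=
    hG.norm.integrable_sq.const_mul _
  have hbound := hlin.add hquad
  have hstep : Integrable (fun s => f (x - η • G s)) μ :=
    integrable_of_le_of_le
      (hf.continuous.comp_aestronglyMeasurable
        (aestronglyMeasurable_const.sub (hG.aestronglyMeasurable.const_smul η)))
      (ae_of_all _ fun s => hc (mem_range_self _))
      (ae_of_all _ fun s => apply_sub_smul_le hf hL x (G s) η)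
      (integrable_const c) hbound
  calc ∫ s, f (x - η • G s) ∂μ
      ≤ ∫ s, (f x - η * ⟪gradient f x, G s⟫ + L / 2 * η ^ 2 * ‖G s‖ ^ 2) ∂μ :=
        integral_mono hstep hbound fun s => apply_sub_smul_le hf hL x (G s) η
    _ = f x - η * ⟪gradient f x, ∫ s, G s ∂μ⟫ + L / 2 * η ^ 2 * ∫ s, ‖G s‖ ^ 2 ∂μ := by
        rw [integral_add hlin hquad,
          integral_sub (integrable_const _) ((hG₁.const_inner _).const_mul η),
          integral_const_mul, integral_const_mul, integral_inner hG₁, integral_const]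
        simp only [probReal_univ, one_smul]

end Expectation

theorem one_step_primal_gap_recursion {Ω : Type*} [MeasureSpace Ω]
    [IsProbabilityMeasure (volume : Measure Ω)]
    {E : Type*} [NormedAddCommGroup E] [InnerProductSpace ℝ E] [FiniteDimensional ℝ E]
    (P : E → ℝ) (hP : Differentiable ℝ P) (LP : ℝ) (hLP : 0 < LP)
    (hLip : ∀ x y, ‖gradient P x - gradient P y‖ ≤ LP * ‖x - y‖)
    (Pstar : ℝ) (hPstar : IsGLB (Set.range P) Pstar)
    (w : E) (η : ℝ) (hη : 0 < η) (hη' : η ≤ 1 / (4 * LP))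
    (G : Ω → E) (hG : MemLp G 2)
    (m : E) (hm : m = ∫ s, G s)
    (σ : ℝ) (hσ : (∫ s, ‖G s - m‖ ^ 2) ≤ σ ^ 2) :
    (∫ s, P (w - η • G s)) - Pstar ≤
      (P w - Pstar) - η / 2 * ‖gradient P w‖ ^ 2
        + η / 2 * ‖gradient P w - m‖ ^ 2 + LP * η ^ 2 * σ ^ 2 / 2 := by
  have hstep := integral_apply_sub_smul_le hP hLip ⟨Pstar, hPstar.1⟩ w η hG
  have hsecond : ∫ s, ‖G s‖ ^ 2 = (∫ s, ‖G s - m‖ ^ 2) + ‖m‖ ^ 2 := by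
    rw [hm, integral_norm_sub_integral_sq hG]; ring
  rw [← hm, hsecond, mul_add] at hstep
  have hLη : LP * η ≤ 1 / 4 := by
    rw [le_div_iff₀ (by positivity)] at hη'
    linarith
  have hvar : LP / 2 * η ^ 2 * (∫ s, ‖G s - m‖ ^ 2) ≤ LP / 2 * η ^ 2 * σ ^ 2 :=
    mul_le_mul_of_nonneg_left hσ (by positivity)
  have hmean : LP / 2 * η ^ 2 * ‖m‖ ^ 2 ≤ η / 2 * ‖m‖ ^ 2 :=
    mul_le_mul_of_nonneg_right (by nlinarith) (sq_nonneg _)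
  rw [norm_sub_sq_real]
  linarith
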